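/- arXiv:1806.07939 — 2 statements merged into one kernel-verified Lean document; each statement's English description precedes it below -/
import Mathlib

section
/- Under the conformal change ā_{ij} = e^{2σ}a_{ij}, b̄_i = e^{σ}b_i, one has r̄_{ij} = e^{σ}[r_{ij} + ρ a_{ij} − ½(b_i σ_j + b_j σ_i)], where σ_j = ∂_jσ and ρ = σ_r b^r with b^r = a^{rs}b_s. -/
noncomputable section

namespace CD

/-- Partial derivative of `f` in the `j`-th coordinate direction at `x`. -/
def pd {n : ℕ} (f : (Fin n → ℝ) → ℝ) (j : Fin n) (x : Fin n → ℝ) : ℝ :=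
  fderiv ℝ f x (Pi.single j 1)

/-- Christoffel symbols `γ^i_{jk} = ½ a^{ir}(∂_j a_{rk} + ∂_k a_{rj} − ∂_r a_{jk})`
of the Riemannian metric `a`, where `ainv` denotes the inverse matrix field `a^{ij}`. -/
def chr {n : ℕ} (a ainv : (Fin n → ℝ) → Matrix (Fin n) (Fin n) ℝ)
    (x : Fin n → ℝ) (i j k : Fin n) : ℝ :=
  (1 / 2) * ∑ r, ainv x i r *
    (pd (fun z => a z r k) j x + pd (fun z => a z r j) k x - pd (fun z => a z j k) r x)

/-- Covariant derivative `b_{i:j} = ∂_j b_i − b_r γ^r_{ij}`. -/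
def covd {n : ℕ} (a ainv : (Fin n → ℝ) → Matrix (Fin n) (Fin n) ℝ)
    (b : (Fin n → ℝ) → Fin n → ℝ) (x : Fin n → ℝ) (i j : Fin n) : ℝ :=
  pd (fun z => b z i) j x - ∑ r, b x r * chr a ainv x r i j

/-- `r_{ij}` with `2r_{ij} = b_{i:j} + b_{j:i}`. -/
def rlow {n : ℕ} (a ainv : (Fin n → ℝ) → Matrix (Fin n) (Fin n) ℝ)
    (b : (Fin n → ℝ) → Fin n → ℝ) (x : Fin n → ℝ) (i j : Fin n) : ℝ :=
  (covd a ainv b x i j + covd a ainv b x j i) / 2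

/-- `s_{ij}` with `2s_{ij} = b_{i:j} − b_{j:i}`. -/
def slow {n : ℕ} (a ainv : (Fin n → ℝ) → Matrix (Fin n) (Fin n) ℝ)
    (b : (Fin n → ℝ) → Fin n → ℝ) (x : Fin n → ℝ) (i j : Fin n) : ℝ :=
  (covd a ainv b x i j - covd a ainv b x j i) / 2

/-- `b^i = a^{ir} b_r`. -/
def bup {n : ℕ} (ainv : (Fin n → ℝ) → Matrix (Fin n) (Fin n) ℝ)
    (b : (Fin n → ℝ) → Fin n → ℝ) (x : Fin n → ℝ) (i : Fin n) : ℝ :=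
  ∑ r, ainv x i r * b x r

/-- `b² = a^{rs} b_r b_s`. -/
def bsq {n : ℕ} (ainv : (Fin n → ℝ) → Matrix (Fin n) (Fin n) ℝ)
    (b : (Fin n → ℝ) → Fin n → ℝ) (x : Fin n → ℝ) : ℝ :=
  ∑ r, ∑ s, ainv x r s * b x r * b x s

/-- `s^i_j = a^{ir} s_{rj}`. -/
def sup {n : ℕ} (a ainv : (Fin n → ℝ) → Matrix (Fin n) (Fin n) ℝ)
    (b : (Fin n → ℝ) → Fin n → ℝ) (x : Fin n → ℝ) (i j : Fin n) : ℝ :=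
  ∑ r, ainv x i r * slow a ainv b x r j

/-- `s_j = b_r s^r_j`. -/
def svec {n : ℕ} (a ainv : (Fin n → ℝ) → Matrix (Fin n) (Fin n) ℝ)
    (b : (Fin n → ℝ) → Fin n → ℝ) (x : Fin n → ℝ) (j : Fin n) : ℝ :=
  ∑ r, b x r * sup a ainv b x r j

/-- `r_i = b^r r_{ri}`. -/
def rvec {n : ℕ} (a ainv : (Fin n → ℝ) → Matrix (Fin n) (Fin n) ℝ)
    (b : (Fin n → ℝ) → Fin n → ℝ) (x : Fin n → ℝ) (i : Fin n) : ℝ :=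
  ∑ r, bup ainv b x r * rlow a ainv b x r i

/-- `α(x,y) = √(a_{ij}(x) y^i y^j)`. -/
def alpha {n : ℕ} (a : (Fin n → ℝ) → Matrix (Fin n) (Fin n) ℝ)
    (x y : Fin n → ℝ) : ℝ :=
  Real.sqrt (∑ i, ∑ j, a x i j * y i * y j)

/-- `β(x,y) = b_i(x) y^i`. -/
def beta {n : ℕ} (b : (Fin n → ℝ) → Fin n → ℝ) (x y : Fin n → ℝ) : ℝ :=
  ∑ i, b x i * y i

/-- `γ^i_{00} = γ^i_{jk} y^j y^k`. -/
def gam00 {n : ℕ} (a ainv : (Fin n → ℝ) → Matrix (Fin n) (Fin n) ℝ)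
    (x y : Fin n → ℝ) (i : Fin n) : ℝ :=
  ∑ j, ∑ k, chr a ainv x i j k * y j * y k

/-- `γ^m_{0m} = γ^m_{jm} y^j`. -/
def gamTr {n : ℕ} (a ainv : (Fin n → ℝ) → Matrix (Fin n) (Fin n) ℝ)
    (x y : Fin n → ℝ) : ℝ :=
  ∑ m, ∑ j, chr a ainv x m j m * y j

/-- `r_{00} = r_{ij} y^i y^j`. -/
def r00 {n : ℕ} (a ainv : (Fin n → ℝ) → Matrix (Fin n) (Fin n) ℝ)
    (b : (Fin n → ℝ) → Fin n → ℝ) (x y : Fin n → ℝ) : ℝ :=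
  ∑ i, ∑ j, rlow a ainv b x i j * y i * y j

/-- `s^i_0 = s^i_j y^j`. -/
def sup0 {n : ℕ} (a ainv : (Fin n → ℝ) → Matrix (Fin n) (Fin n) ℝ)
    (b : (Fin n → ℝ) → Fin n → ℝ) (x y : Fin n → ℝ) (i : Fin n) : ℝ :=
  ∑ j, sup a ainv b x i j * y j

/-- `s_0 = s_j y^j`. -/
def s0 {n : ℕ} (a ainv : (Fin n → ℝ) → Matrix (Fin n) (Fin n) ℝ)
    (b : (Fin n → ℝ) → Fin n → ℝ) (x y : Fin n → ℝ) : ℝ :=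
  ∑ j, svec a ainv b x j * y j

/-- `r_0 = r_i y^i`. -/
def r0 {n : ℕ} (a ainv : (Fin n → ℝ) → Matrix (Fin n) (Fin n) ℝ)
    (b : (Fin n → ℝ) → Fin n → ℝ) (x y : Fin n → ℝ) : ℝ :=
  ∑ i, rvec a ainv b x i * y i

/-- `σ₀ = σ_i y^i` where `σ_i = ∂_i σ`. -/
def sig0 {n : ℕ} (σ : (Fin n → ℝ) → ℝ) (x y : Fin n → ℝ) : ℝ :=
  ∑ j, pd σ j x * y j

/-- `σ^i = a^{ir} σ_r`. -/
def sigup {n : ℕ} (ainv : (Fin n → ℝ) → Matrix (Fin n) (Fin n) ℝ)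
    (σ : (Fin n → ℝ) → ℝ) (x : Fin n → ℝ) (i : Fin n) : ℝ :=
  ∑ r, ainv x i r * pd σ r x

/-- `ρ = σ_r b^r`. -/
def rho {n : ℕ} (ainv : (Fin n → ℝ) → Matrix (Fin n) (Fin n) ℝ)
    (b : (Fin n → ℝ) → Fin n → ℝ) (σ : (Fin n → ℝ) → ℝ) (x : Fin n → ℝ) : ℝ :=
  ∑ r, pd σ r x * bup ainv b x r

/-- `L_α`. -/
def La (L : ℝ → ℝ → ℝ) (s t : ℝ) : ℝ := deriv (fun u => L u t) s
/-- `L_β`. -/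
def Lb (L : ℝ → ℝ → ℝ) (s t : ℝ) : ℝ := deriv (fun u => L s u) t
/-- `L_{αα}`. -/
def Laa (L : ℝ → ℝ → ℝ) (s t : ℝ) : ℝ := deriv (fun u => La L u t) s
/-- `L_{ααα}`. -/
def Laaa (L : ℝ → ℝ → ℝ) (s t : ℝ) : ℝ := deriv (fun u => Laa L u t) s

/-- `γ² = b²α² − β²`, as a function of `b², α, β`. -/
def gam2 (b2 s t : ℝ) : ℝ := b2 * s ^ 2 - t ^ 2

/-- `Ω = β²L_α + αγ²L_{αα}`. -/
def Om (L : ℝ → ℝ → ℝ) (b2 s t : ℝ) : ℝ :=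
  t ^ 2 * La L s t + s * gam2 b2 s t * Laa L s t

/-- `A = αL_αL_{ααα} + 3L_αL_{αα} − 3α(L_{αα})²`. -/
def Afun (L : ℝ → ℝ → ℝ) (s t : ℝ) : ℝ :=
  s * La L s t * Laaa L s t + 3 * La L s t * Laa L s t - 3 * s * (Laa L s t) ^ 2

/-- `B = αβγ²L_αL_βL_{ααα} + β{(3γ² − β²)L_α − 4αγ²L_{αα}}L_βL_{αα} + ΩLL_{αα}`. -/
def Bcal (L : ℝ → ℝ → ℝ) (b2 s t : ℝ) : ℝ :=
  s * t * gam2 b2 s t * La L s t * Lb L s t * Laaa L s t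
    + t * ((3 * gam2 b2 s t - t ^ 2) * La L s t - 4 * s * gam2 b2 s t * Laa L s t)
        * Lb L s t * Laa L s t
    + Om L b2 s t * L s t * Laa L s t

/-- `C* = αβ(r₀₀L_α − 2αs₀L_β)/(2Ω)`. -/
def Cstar {n : ℕ} (L : ℝ → ℝ → ℝ) (a ainv : (Fin n → ℝ) → Matrix (Fin n) (Fin n) ℝ)
    (b : (Fin n → ℝ) → Fin n → ℝ) (x y : Fin n → ℝ) : ℝ :=
  let s := alpha a x y
  let t := beta b x y
  s * t * (r00 a ainv b x y * La L s t - 2 * s * s0 a ainv b x y * Lb L s t)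
    / (2 * Om L (bsq ainv b x) s t)

/-- `D* = αβ[(ρα² − σ₀β)L_α − α(b²σ₀ − ρβ)L_β]/(2Ω)`. -/
def Dstar {n : ℕ} (L : ℝ → ℝ → ℝ) (a ainv : (Fin n → ℝ) → Matrix (Fin n) (Fin n) ℝ)
    (b : (Fin n → ℝ) → Fin n → ℝ) (σ : (Fin n → ℝ) → ℝ) (x y : Fin n → ℝ) : ℝ :=
  let s := alpha a x y
  let t := beta b x y
  s * t * ((rho ainv b σ x * s ^ 2 - sig0 σ x y * t) * La L s t
      - s * (bsq ainv b x * sig0 σ x y - rho ainv b σ x * t) * Lb L s t)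
    / (2 * Om L (bsq ainv b x) s t)

/-- The spray difference vector
`B^i = (αL_β/L_α)s^i_0 + C*[(βL_β/(αL))y^i − (αL_{αα}/L_α)(y^i/α − αb^i/β)]`. -/
def Bi {n : ℕ} (L : ℝ → ℝ → ℝ) (a ainv : (Fin n → ℝ) → Matrix (Fin n) (Fin n) ℝ)
    (b : (Fin n → ℝ) → Fin n → ℝ) (x y : Fin n → ℝ) (i : Fin n) : ℝ :=
  let s := alpha a x y
  let t := beta b x y
  (s * Lb L s t / La L s t) * sup0 a ainv b x y i
    + Cstar L a ainv b x y *
        ((t * Lb L s t / (s * L s t)) * y i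
          - (s * Laa L s t / La L s t) * (y i / s - s * bup ainv b x i / t))

/-- `B^m_m = ∂B^m/∂y^m`. -/
def Bmm {n : ℕ} (L : ℝ → ℝ → ℝ) (a ainv : (Fin n → ℝ) → Matrix (Fin n) (Fin n) ℝ)
    (b : (Fin n → ℝ) → Fin n → ℝ) (x y : Fin n → ℝ) : ℝ :=
  ∑ m, fderiv ℝ (fun y' => Bi L a ainv b x y' m) y (Pi.single m 1)

/-- `B^{ij} = (αL_β/L_α)(s^i_0y^j − s^j_0y^i) + (α²L_{αα}/(βL_α))C*(b^iy^j − b^jy^i)`. -/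
def BijC {n : ℕ} (L : ℝ → ℝ → ℝ) (a ainv : (Fin n → ℝ) → Matrix (Fin n) (Fin n) ℝ)
    (b : (Fin n → ℝ) → Fin n → ℝ) (x y : Fin n → ℝ) (i j : Fin n) : ℝ :=
  let s := alpha a x y
  let t := beta b x y
  (s * Lb L s t / La L s t) * (sup0 a ainv b x y i * y j - sup0 a ainv b x y j * y i)
    + (s ^ 2 * Laa L s t / (t * La L s t)) * Cstar L a ainv b x y
        * (bup ainv b x i * y j - bup ainv b x j * y i)

/-- The closed formula for `B^{im}_m`. -/
def BimmC {n : ℕ} (L : ℝ → ℝ → ℝ) (a ainv : (Fin n → ℝ) → Matrix (Fin n) (Fin n) ℝ)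
    (b : (Fin n → ℝ) → Fin n → ℝ) (x y : Fin n → ℝ) (i : Fin n) : ℝ :=
  let s := alpha a x y
  let t := beta b x y
  let b2 := bsq ainv b x
  let O := Om L b2 s t
  (n + 1 : ℝ) * s * Lb L s t * sup0 a ainv b x y i / La L s t
    + s * ((n + 1 : ℝ) * s ^ 2 * O * Laa L s t * bup ainv b x i
        + t * gam2 b2 s t * Afun L s t * y i) * r00 a ainv b x y / (2 * O ^ 2)
    - s ^ 2 * ((n + 1 : ℝ) * s ^ 2 * O * Lb L s t * Laa L s t * bup ainv b x i
        + Bcal L b2 s t * y i) * s0 a ainv b x y / (La L s t * O ^ 2)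
    - s ^ 3 * Laa L s t * y i * r0 a ainv b x y / O

/-- The conformal correction `K^{im}_m`, given by
`2K^{im}_m = (n+1)(αL_β/L_α)(σ₀b^i − βσ^i)
  + α{((n+1)α²ΩL_{αα}b^i + βγ²Ay^i)/Ω²}(ρα² − σ₀β)
  − [α²{(n+1)α²ΩL_βL_{αα}b^i + By^i}/(L_αΩ²) − α³L_{αα}y^i/Ω](b²σ₀ − ρβ)`. -/
def Kimm {n : ℕ} (L : ℝ → ℝ → ℝ) (a ainv : (Fin n → ℝ) → Matrix (Fin n) (Fin n) ℝ)
    (b : (Fin n → ℝ) → Fin n → ℝ) (σ : (Fin n → ℝ) → ℝ) (x y : Fin n → ℝ) (i : Fin n) : ℝ :=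
  let s := alpha a x y
  let t := beta b x y
  let b2 := bsq ainv b x
  let O := Om L b2 s t
  let σ0 := sig0 σ x y
  let ρ := rho ainv b σ x
  (1 / 2) *
    ((n + 1 : ℝ) * (s * Lb L s t / La L s t) * (σ0 * bup ainv b x i - t * sigup ainv σ x i)
      + s * (((n + 1 : ℝ) * s ^ 2 * O * Laa L s t * bup ainv b x i
            + t * gam2 b2 s t * Afun L s t * y i) / O ^ 2) * (ρ * s ^ 2 - σ0 * t)
      - (s ^ 2 * ((n + 1 : ℝ) * s ^ 2 * O * Lb L s t * Laa L s t * bup ainv b x i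
            + Bcal L b2 s t * y i) / (La L s t * O ^ 2)
          - s ^ 3 * Laa L s t * y i / O) * (b2 * σ0 - ρ * t))

/-- `E` is hp(d): it agrees with a homogeneous polynomial of degree `d` in `y`. -/
def IsHP {n : ℕ} (d : ℕ) (E : (Fin n → ℝ) → ℝ) : Prop :=
  ∃ p : MvPolynomial (Fin n) ℝ, p.IsHomogeneous d ∧ ∀ y, E y = MvPolynomial.eval y p

/-- The conformally changed metric `ā_{ij} = e^{2σ} a_{ij}`. -/
def abar {n : ℕ} (σ : (Fin n → ℝ) → ℝ) (a : (Fin n → ℝ) → Matrix (Fin n) (Fin n) ℝ) :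
    (Fin n → ℝ) → Matrix (Fin n) (Fin n) ℝ :=
  fun z => Real.exp (2 * σ z) • a z

/-- The conformally changed covector `b̄_i = e^{σ} b_i`. -/
def bbar {n : ℕ} (σ : (Fin n → ℝ) → ℝ) (b : (Fin n → ℝ) → Fin n → ℝ) :
    (Fin n → ℝ) → Fin n → ℝ :=
  fun z i => Real.exp (σ z) * b z i

/-- The special (α,β)-metric `L = α + εβ + kβ²/α`. -/
def Lsp (ε k : ℝ) : ℝ → ℝ → ℝ := fun s t => s + ε * t + k * t ^ 2 / s

section Helpers

variable {n : ℕ}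

lemma pd_mul {f g : (Fin n → ℝ) → ℝ} {x : Fin n → ℝ}
    (hf : DifferentiableAt ℝ f x) (hg : DifferentiableAt ℝ g x) (j : Fin n) :
    pd (fun z => f z * g z) j x = f x * pd g j x + g x * pd f j x := by
  simp [pd, fderiv_fun_mul hf hg]

lemma pd_exp_comp {σ : (Fin n → ℝ) → ℝ} {x : Fin n → ℝ}
    (hσ : DifferentiableAt ℝ σ x) (j : Fin n) :
    pd (fun z => Real.exp (σ z)) j x = Real.exp (σ x) * pd σ j x := by
  simp [pd, fderiv_exp hσ]

lemma pd_exp_two {σ : (Fin n → ℝ) → ℝ} {x : Fin n → ℝ}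
    (hσ : DifferentiableAt ℝ σ x) (j : Fin n) :
    pd (fun z => Real.exp (2 * σ z)) j x
      = Real.exp (2 * σ x) * (2 * pd σ j x) := by
  have h2 : DifferentiableAt ℝ (fun z => 2 * σ z) x := hσ.const_mul 2
  have := fderiv_exp h2
  simp only [pd, this, fderiv_const_mul hσ 2]
  simp [mul_comm]

lemma sum_delta_mul (f : Fin n → ℝ) (j : Fin n) (c : ℝ) :
    ∑ r, f r * ((if r = j then (1:ℝ) else 0) * c) = f j * c := by
  have h : ∀ r, f r * ((if r = j then (1:ℝ) else 0) * c)
      = if r = j then f j * c else 0 := by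
    intro r
    split_ifs with hrj
    · subst hrj; ring
    · ring
  rw [Finset.sum_congr rfl (fun r _ => h r), Finset.sum_ite_eq' Finset.univ j]
  simp

end Helpers

/-- conformal change of r_{ij}. -/
theorem conformal_change_r_ij
    {n : ℕ} (hn : 2 ≤ n) (M : Set (Fin n → ℝ)) (hM : IsOpen M)
    (a ainv abarInv : (Fin n → ℝ) → Matrix (Fin n) (Fin n) ℝ)
    (b : (Fin n → ℝ) → Fin n → ℝ) (σ : (Fin n → ℝ) → ℝ)
    (ha : ∀ i j, ContDiffOn ℝ (⊤ : ℕ∞) (fun z => a z i j) M)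
    (hb : ∀ i, ContDiffOn ℝ (⊤ : ℕ∞) (fun z => b z i) M)
    (hσ : ContDiffOn ℝ (⊤ : ℕ∞) σ M)
    (hsym : ∀ x ∈ M, (a x).IsSymm)
    (hpos : ∀ x ∈ M, (a x).PosDef)
    (hInv : ∀ x ∈ M, a x * ainv x = 1)
    (hInvBar : ∀ x ∈ M, abar σ a x * abarInv x = 1)
    (x : Fin n → ℝ) (hx : x ∈ M) :
    ∀ i j, rlow (abar σ a) abarInv (bbar σ b) x i j
      = Real.exp (σ x) * (rlow a ainv b x i j + rho ainv b σ x * a x i j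
          - (b x i * pd σ j x + b x j * pd σ i x) / 2) := by
  have hmem : M ∈ nhds x := hM.mem_nhds hx
  have hσd : DifferentiableAt ℝ σ x :=
    (hσ.contDiffAt hmem).differentiableAt (by simp)
  have had : ∀ r k, DifferentiableAt ℝ (fun z => a z r k) x := fun r k =>
    ((ha r k).contDiffAt hmem).differentiableAt (by simp)
  have hbd : ∀ i, DifferentiableAt ℝ (fun z => b z i) x := fun i =>
    ((hb i).contDiffAt hmem).differentiableAt (by simp)
  set E := Real.exp (2 * σ x) with hE
  have hEne : E ≠ 0 := Real.exp_ne_zero _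
  -- the inverse of the conformal metric
  have h1 : a x * (E • abarInv x) = 1 := by
    have h0 := hInvBar x hx
    rw [show abar σ a x = E • a x from rfl, Matrix.smul_mul] at h0
    rw [Matrix.mul_smul]; exact h0
  have h2 : ainv x = E • abarInv x := Matrix.right_inv_eq_right_inv (hInv x hx) h1
  have habarInv : abarInv x = E⁻¹ • ainv x := by
    rw [h2, smul_smul, inv_mul_cancel₀ hEne, one_smul]
  -- symmetry facts
  have hsyma : ∀ i j, a x i j = a x j i := fun i j => (hsym x hx).apply j i
  have hainv_eq : ainv x = (a x)⁻¹ := (Matrix.inv_eq_right_inv (hInv x hx)).symm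
  have hsymInv : ∀ i j, ainv x i j = ainv x j i := by
    have hsi : (ainv x).IsSymm := by
      unfold Matrix.IsSymm
      rw [hainv_eq, Matrix.transpose_nonsing_inv, (hsym x hx)]
    exact fun i j => hsi.apply j i
  have hA : ainv x * a x = 1 := mul_eq_one_comm.mp (hInv x hx)
  have hdelta : ∀ i k, (∑ r, ainv x i r * a x r k) = if i = k then (1:ℝ) else 0 := by
    intro i k
    have := congrFun (congrFun hA i) k
    rw [Matrix.mul_apply] at this
    rw [this, Matrix.one_apply]
  -- derivatives of the conformal data
  have hpdabar : ∀ r k j, pd (fun z => abar σ a z r k) j x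
      = E * (2 * pd σ j x * a x r k + pd (fun z => a z r k) j x) := by
    intro r k j
    have heq : (fun z => abar σ a z r k) = fun z => Real.exp (2 * σ z) * a z r k := rfl
    rw [heq, pd_mul ((hσd.const_mul 2).exp) (had r k), pd_exp_two hσd, ← hE]
    ring
  have hpdbbar : ∀ i j, pd (fun z => bbar σ b z i) j x
      = Real.exp (σ x) * (pd σ j x * b x i + pd (fun z => b z i) j x) := by
    intro i j
    have heq : (fun z => bbar σ b z i) = fun z => Real.exp (σ z) * b z i := rfl
    rw [heq, pd_mul (hσd.exp) (hbd i), pd_exp_comp hσd]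
    ring
  -- Christoffel symbols of the conformal metric
  have hchr : ∀ i j k, chr (abar σ a) abarInv x i j k
      = chr a ainv x i j k + ((if i = k then (1:ℝ) else 0) * pd σ j x
        + (if i = j then (1:ℝ) else 0) * pd σ k x - a x j k * sigup ainv σ x i) := by
    intro i j k
    unfold chr
    have step : ∀ r, abarInv x i r *
        (pd (fun z => abar σ a z r k) j x + pd (fun z => abar σ a z r j) k x
          - pd (fun z => abar σ a z j k) r x)
      = ainv x i r *
        (pd (fun z => a z r k) j x + pd (fun z => a z r j) k x
          - pd (fun z => a z j k) r x)
        + 2 * (pd σ j x * (ainv x i r * a x r k) + pd σ k x * (ainv x i r * a x r j)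
            - (ainv x i r * pd σ r x) * a x j k) := by
      intro r
      rw [hpdabar, hpdabar, hpdabar, habarInv]
      simp only [Matrix.smul_apply, smul_eq_mul]
      field_simp
      ring
    rw [Finset.sum_congr rfl (fun r _ => step r), Finset.sum_add_distrib]
    have s2 : ∑ r, (2 * (pd σ j x * (ainv x i r * a x r k)
          + pd σ k x * (ainv x i r * a x r j) - (ainv x i r * pd σ r x) * a x j k))
        = 2 * (pd σ j x * (if i = k then (1:ℝ) else 0)
            + pd σ k x * (if i = j then (1:ℝ) else 0)
            - sigup ainv σ x i * a x j k) := by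
      rw [← Finset.mul_sum]
      congr 1
      rw [Finset.sum_sub_distrib, Finset.sum_add_distrib, ← Finset.mul_sum,
        ← Finset.mul_sum, ← Finset.sum_mul, hdelta, hdelta]
      unfold sigup
      rfl
    rw [s2]
    ring
  -- the contraction b_r σ^r equals ρ
  have hrho2 : ∑ r, b x r * sigup ainv σ x r = rho ainv b σ x := by
    unfold sigup rho bup
    simp only [Finset.mul_sum]
    rw [Finset.sum_comm]
    apply Finset.sum_congr rfl
    intro s _
    apply Finset.sum_congr rfl
    intro r _
    rw [hsymInv s r]
    ring
  -- the covariant derivative of the conformal data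
  have hcovd : ∀ i j, covd (abar σ a) abarInv (bbar σ b) x i j
      = Real.exp (σ x) * (covd a ainv b x i j - b x j * pd σ i x
          + a x i j * rho ainv b σ x) := by
    intro i j
    have e1 : ∀ r, bbar σ b x r * chr (abar σ a) abarInv x r i j
        = Real.exp (σ x) * (b x r * chr a ainv x r i j)
          + Real.exp (σ x) * (b x r * ((if r = j then (1:ℝ) else 0) * pd σ i x))
          + Real.exp (σ x) * (b x r * ((if r = i then (1:ℝ) else 0) * pd σ j x))
          - Real.exp (σ x) * (a x i j * (b x r * sigup ainv σ x r)) := by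
      intro r
      rw [show bbar σ b x r = Real.exp (σ x) * b x r from rfl, hchr r i j]
      ring
    have S1 : ∑ r, Real.exp (σ x) * (b x r * chr a ainv x r i j)
        = Real.exp (σ x) * ∑ r, b x r * chr a ainv x r i j :=
      (Finset.mul_sum _ _ _).symm
    have S2 : ∑ r, Real.exp (σ x) * (b x r * ((if r = j then (1:ℝ) else 0) * pd σ i x))
        = Real.exp (σ x) * (b x j * pd σ i x) := by
      rw [← Finset.mul_sum, sum_delta_mul]
    have S3 : ∑ r, Real.exp (σ x) * (b x r * ((if r = i then (1:ℝ) else 0) * pd σ j x))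
        = Real.exp (σ x) * (b x i * pd σ j x) := by
      rw [← Finset.mul_sum, sum_delta_mul]
    have S4 : ∑ r, Real.exp (σ x) * (a x i j * (b x r * sigup ainv σ x r))
        = Real.exp (σ x) * (a x i j * rho ainv b σ x) := by
      rw [← Finset.mul_sum, ← Finset.mul_sum, hrho2]
    unfold covd
    rw [hpdbbar i j, Finset.sum_congr rfl (fun r _ => e1 r), Finset.sum_sub_distrib,
      Finset.sum_add_distrib, Finset.sum_add_distrib, S1, S2, S3, S4]
    ring
  intro i j
  unfold rlow
  rw [hcovd i j, hcovd j i, hsyma j i]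
  ring

end CD
end
end

section
/- Under the conformal change ā_{ij} = e^{2σ}a_{ij}, b̄_i = e^{σ}b_i, one has s̄^i_j = e^{−σ}[s^i_j + ½(b^i σ_j − b_j σ^i)], where σ_j = ∂_jσ, σ^i = a^{ir}σ_r and b^i = a^{ir}b_r. -/
noncomputable section

namespace CD

section Aux

lemma pd_exp_mul {n : ℕ} (σ f : (Fin n → ℝ) → ℝ) (c : ℝ) (j : Fin n) (x : Fin n → ℝ)
    (hσ : DifferentiableAt ℝ σ x) (hf : DifferentiableAt ℝ f x) :
    pd (fun z => Real.exp (c * σ z) * f z) j x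
      = Real.exp (c * σ x) * (c * pd σ j x * f x + pd f j x) := by
  have h1 : HasFDerivAt (fun z => c * σ z) (c • fderiv ℝ σ x) x :=
    (hσ.hasFDerivAt).const_mul c
  have h3 := h1.exp.mul hf.hasFDerivAt
  rw [pd, show (fun z => Real.exp (c * σ z) * f z) = (fun x => Real.exp (c * σ x)) * f from rfl,
    h3.fderiv]
  simp only [ContinuousLinearMap.add_apply, ContinuousLinearMap.smul_apply, smul_eq_mul, pd]
  ring

lemma inv_unique {m : ℕ} {A B C : Matrix (Fin m) (Fin m) ℝ} (hB : A * B = 1) (hC : A * C = 1) :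
    B = C := by
  have hBA : B * A = 1 := mul_eq_one_comm.mp hB
  calc B = B * (A * C) := by rw [hC, Matrix.mul_one]
  _ = (B * A) * C := by rw [Matrix.mul_assoc]
  _ = C := by rw [hBA, Matrix.one_mul]

end Aux

/-- conformal change of s^i_j. -/
theorem conformal_change_s_up_i_j
    {n : ℕ} (hn : 2 ≤ n) (M : Set (Fin n → ℝ)) (hM : IsOpen M)
    (a ainv abarInv : (Fin n → ℝ) → Matrix (Fin n) (Fin n) ℝ)
    (b : (Fin n → ℝ) → Fin n → ℝ) (σ : (Fin n → ℝ) → ℝ)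
    (ha : ∀ i j, ContDiffOn ℝ (⊤ : ℕ∞) (fun z => a z i j) M)
    (hb : ∀ i, ContDiffOn ℝ (⊤ : ℕ∞) (fun z => b z i) M)
    (hσ : ContDiffOn ℝ (⊤ : ℕ∞) σ M)
    (hsym : ∀ x ∈ M, (a x).IsSymm)
    (hpos : ∀ x ∈ M, (a x).PosDef)
    (hInv : ∀ x ∈ M, a x * ainv x = 1)
    (hInvBar : ∀ x ∈ M, abar σ a x * abarInv x = 1)
    (x : Fin n → ℝ) (hx : x ∈ M) :
    ∀ i j, sup (abar σ a) abarInv (bbar σ b) x i j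
      = Real.exp (-σ x) * (sup a ainv b x i j
          + (bup ainv b x i * pd σ j x - b x j * sigup ainv σ x i) / 2) := by
  intro i j
  have hnx : M ∈ nhds x := hM.mem_nhds hx
  have dσ : DifferentiableAt ℝ σ x := (hσ.contDiffAt hnx).differentiableAt (by simp)
  have da : ∀ r k, DifferentiableAt ℝ (fun z => a z r k) x :=
    fun r k => ((ha r k).contDiffAt hnx).differentiableAt (by simp)
  have db : ∀ r, DifferentiableAt ℝ (fun z => b z r) x :=
    fun r => ((hb r).contDiffAt hnx).differentiableAt (by simp)
  have hAI : abarInv x = Real.exp (-(2 * σ x)) • ainv x := by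
    refine inv_unique (hInvBar x hx) ?_
    have h1 : abar σ a x * (Real.exp (-(2 * σ x)) • ainv x)
        = (Real.exp (2 * σ x) * Real.exp (-(2 * σ x))) • (a x * ainv x) := by
      simp [abar, Matrix.smul_mul, Matrix.mul_smul, smul_smul, mul_comm]
    rw [h1, hInv x hx, ← Real.exp_add]
    norm_num
  have hAIe : ∀ i r, abarInv x i r = Real.exp (-(2 * σ x)) * ainv x i r := by
    intro i r; rw [hAI]; simp
  have hIA : ∀ i k, (∑ r, ainv x i r * a x r k) = if i = k then 1 else 0 := by
    intro i k
    have h : ainv x * a x = 1 := mul_eq_one_comm.mp (hInv x hx)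
    have h2 : (ainv x * a x) i k = (1 : Matrix (Fin n) (Fin n) ℝ) i k := by rw [h]
    simpa [Matrix.mul_apply, Matrix.one_apply] using h2
  have hE2 : Real.exp (-(2 * σ x)) * Real.exp (2 * σ x) = 1 := by
    rw [← Real.exp_add]; norm_num
  have hEm : Real.exp (-(2 * σ x)) * Real.exp (σ x) = Real.exp (-σ x) := by
    rw [← Real.exp_add]; congr 1; ring
  have hpda : ∀ (r k j : Fin n), pd (fun z => abar σ a z r k) j x
      = Real.exp (2 * σ x) * (2 * pd σ j x * a x r k + pd (fun z => a z r k) j x) := by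
    intro r k j'
    have h1 : (fun z => abar σ a z r k) = fun z => Real.exp (2 * σ z) * a z r k := by
      funext z; simp [abar]
    rw [h1, pd_exp_mul σ _ 2 j' x dσ (da r k)]
  have hpdb : ∀ (r j : Fin n), pd (fun z => bbar σ b z r) j x
      = Real.exp (σ x) * (pd σ j x * b x r + pd (fun z => b z r) j x) := by
    intro r j'
    have h1 : (fun z => bbar σ b z r) = fun z => Real.exp (1 * σ z) * b z r := by
      funext z; simp [bbar]
    rw [h1, pd_exp_mul σ _ 1 j' x dσ (db r)]
    norm_num
  have hchr : ∀ I J K : Fin n, chr (abar σ a) abarInv x I J K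
      = chr a ainv x I J K + pd σ J x * (if I = K then 1 else 0)
        + pd σ K x * (if I = J then 1 else 0) - a x J K * sigup ainv σ x I := by
    intro I J K
    have key : ∀ r, abarInv x I r *
        (pd (fun z => abar σ a z r K) J x + pd (fun z => abar σ a z r J) K x
          - pd (fun z => abar σ a z J K) r x)
      = ainv x I r * (pd (fun z => a z r K) J x + pd (fun z => a z r J) K x
            - pd (fun z => a z J K) r x)
        + 2 * pd σ J x * (ainv x I r * a x r K)
        + 2 * pd σ K x * (ainv x I r * a x r J)
        - 2 * a x J K * (ainv x I r * pd σ r x) := by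
      intro r
      rw [hAIe, hpda, hpda, hpda]
      linear_combination (ainv x I r * (pd (fun z => a z r K) J x
        + pd (fun z => a z r J) K x - pd (fun z => a z J K) r x
        + 2 * pd σ J x * a x r K + 2 * pd σ K x * a x r J
        - 2 * pd σ r x * a x J K)) * hE2
    rw [chr, Finset.sum_congr rfl (fun r _ => key r)]
    simp only [Finset.sum_add_distrib, Finset.sum_sub_distrib, ← Finset.mul_sum]
    rw [hIA I K, hIA I J, chr, sigup]
    ring
  have hcovd : ∀ i j : Fin n, covd (abar σ a) abarInv (bbar σ b) x i j
      = Real.exp (σ x) * (covd a ainv b x i j - pd σ i x * b x j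
          + a x i j * ∑ r, b x r * sigup ainv σ x r) := by
    intro i j
    have term : ∀ r : Fin n, bbar σ b x r * chr (abar σ a) abarInv x r i j
        = Real.exp (σ x) * (b x r * chr a ainv x r i j
            - a x i j * (b x r * sigup ainv σ x r))
          + (if r = j then Real.exp (σ x) * (pd σ i x * b x j) else 0)
          + (if r = i then Real.exp (σ x) * (pd σ j x * b x i) else 0) := by
      intro r
      rw [hchr r i j]
      show Real.exp (σ x) * b x r * _ = _
      by_cases h1 : r = j <;> by_cases h2 : r = i
      · subst h1; subst h2; simp; try ring
      · subst h1; simp [h2]; try ring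
      · subst h2; simp [h1]; try ring
      · simp [h1, h2]; try ring
    rw [covd, hpdb i j, Finset.sum_congr rfl fun r _ => term r]
    simp only [Finset.sum_add_distrib, Finset.sum_sub_distrib, Finset.sum_ite_eq',
      Finset.mem_univ, if_true, ← Finset.mul_sum]
    rw [covd]
    ring
  have hslow : ∀ i j : Fin n, slow (abar σ a) abarInv (bbar σ b) x i j
      = Real.exp (σ x) * (slow a ainv b x i j
          + (b x i * pd σ j x - b x j * pd σ i x) / 2) := by
    intro i j
    rw [slow, hcovd i j, hcovd j i, (hsym x hx).apply i j, slow]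
    ring
  have term2 : ∀ r, abarInv x i r * slow (abar σ a) abarInv (bbar σ b) x r j
      = Real.exp (-σ x) * (ainv x i r * slow a ainv b x r j)
        + (Real.exp (-σ x) * pd σ j x / 2) * (ainv x i r * b x r)
        - (Real.exp (-σ x) * b x j / 2) * (ainv x i r * pd σ r x) := by
    intro r
    rw [hAIe, hslow r j]
    linear_combination (ainv x i r * (slow a ainv b x r j
      + (b x r * pd σ j x - b x j * pd σ r x) / 2)) * hEm
  rw [sup, Finset.sum_congr rfl fun r _ => term2 r]
  simp only [Finset.sum_add_distrib, Finset.sum_sub_distrib, ← Finset.mul_sum]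
  rw [sup, bup, sigup]
  ring

end CD
end
end
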